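/- arXiv:0707.0102 — 4 statements merged into one kernel-verified Lean document; each statement's English description precedes it below -/
import Mathlib

section
/- Let (X,d) be a metric space and suppose that for all N, all points x₁,…,x_N ∈ X, all y ∈ X, and all weights aᵢ ∈ [0,1] with Σaᵢ=1, Σ_{i,j} aᵢaⱼ( d(xᵢ,xⱼ)² − d(xᵢ,y)² − d(xⱼ,y)² ) ≤ 0 holds. Fix N, points x₁,…,x_N ∈ X, a probability vector (πᵢ), and a stochastic matrix A = (a_{ij}) with π-reversibility πᵢa_{ij} = πⱼa_{ji}. Define ℰ(l) := Σ_{i,j} πᵢ a^{(l)}_{ij} d(xᵢ,xⱼ)², where A^l = (a^{(l)}_{ij}). Then for every l ∈ ℕ, ℰ(2l) ≤ 2ℰ(l). -/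
/-!
Apply Sturm's inequality at `y = xₘ` with the weights given by the `m`-th row of `B = Aˡ`, and
average over `m` with weights `pₘ`. Since the rows of `B` sum to one, the terms involving `y`
contribute `-2 ℰ(l)`, and by `p`-reversibility of `B` the remaining term is the energy of
`B * B = A²ˡ`. So the averaged (nonpositive) defect is exactly `ℰ(2l) - 2 ℰ(l)`.
-/

open Finset Matrix

section Reversible

variable {R ι : Type*} [CommSemiring R] [Fintype ι] [DecidableEq ι]

def Matrix.IsReversible (p : ι → R) (A : Matrix ι ι R) : Prop :=
  ∀ i j, p i * A i j = p j * A j i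

theorem Matrix.isReversible_iff_diagonal_mul {p : ι → R} {A : Matrix ι ι R} :
    A.IsReversible p ↔ diagonal p * A = Aᵀ * diagonal p := by
  simp only [Matrix.IsReversible, ← Matrix.ext_iff, diagonal_mul, mul_diagonal, transpose_apply,
    mul_comm (A _ _)]

theorem Matrix.IsReversible.pow {p : ι → R} {A : Matrix ι ι R} (hA : A.IsReversible p)
    (l : ℕ) : (A ^ l).IsReversible p := by
  rw [isReversible_iff_diagonal_mul] at hA ⊢
  induction l with
  | zero => simp
  | succ l ih =>
    rw [pow_succ', ← Matrix.mul_assoc, hA, Matrix.mul_assoc, ih, ← Matrix.mul_assoc,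
      ← transpose_mul, ← pow_succ, pow_succ']

end Reversible

theorem sum_sum_mul_mul_sub_sub {ι : Type*} [Fintype ι] (a : ι → ℝ) (ha : ∑ i, a i = 1)
    (f : ι → ι → ℝ) (g : ι → ℝ) :
    ∑ i, ∑ j, a i * a j * (f i j - g i - g j) =
      ∑ i, ∑ j, a i * a j * f i j - 2 * ∑ i, a i * g i := by
  have hg : ∑ i, ∑ j, a i * a j * g i = ∑ i, a i * g i := by
    simp only [mul_right_comm _ (a _), ← mul_sum, ha, mul_one]
  have hg' : ∑ i, ∑ j, a i * a j * g j = ∑ i, a i * g i := by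
    rw [sum_comm]; simp only [mul_comm (a _) (a _)]; exact hg
  simp only [mul_sub, sum_sub_distrib, hg, hg']
  ring

section Energy

variable {ι : Type*} [Fintype ι]

def markovEnergy (p : ι → ℝ) (A : Matrix ι ι ℝ) (c : ι → ι → ℝ) : ℝ :=
  ∑ i, ∑ j, p i * A i j * c i j

theorem Matrix.IsReversible.markovEnergy_mul_self {p : ι → ℝ} {A : Matrix ι ι ℝ}
    (hA : A.IsReversible p) (c : ι → ι → ℝ) :
    markovEnergy p (A * A) c = ∑ m, p m * ∑ j, ∑ k, A m j * A m k * c j k := calc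
  _ = ∑ j, ∑ k, ∑ m, p j * A j m * A m k * c j k := by
        simp only [markovEnergy, mul_apply, mul_sum, sum_mul, mul_assoc]
  _ = ∑ j, ∑ k, ∑ m, p m * A m j * A m k * c j k := by
        simp only [hA _ _]
  _ = ∑ m, p m * ∑ j, ∑ k, A m j * A m k * c j k := by
        simp only [mul_sum, mul_assoc]
        exact (sum_congr rfl fun _ _ => sum_comm).trans sum_comm

theorem Matrix.IsReversible.markovEnergy_mul_self_sub_two_mul {p : ι → ℝ}
    {A : Matrix ι ι ℝ} (hA : A.IsReversible p) (hrow : ∀ i, ∑ j, A i j = 1)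
    {c : ι → ι → ℝ} (hc : ∀ i j, c i j = c j i) :
    markovEnergy p (A * A) c - 2 * markovEnergy p A c =
      ∑ m, p m * ∑ j, ∑ k, A m j * A m k * (c j k - c j m - c k m) := by
  rw [sum_congr rfl fun m _ => by rw [sum_sum_mul_mul_sub_sub (A m) (hrow m) c (c · m)],
    hA.markovEnergy_mul_self]
  simp only [markovEnergy, mul_sub, sum_sub_distrib, mul_sum, hc _ (_ : ι)]
  ring_nf

end Energy

theorem stmt1_general {X : Type*} [MetricSpace X]
    (hsturm : ∀ (N : ℕ) (x : Fin N → X) (y : X) (a : Fin N → ℝ),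
      (∀ i, 0 ≤ a i) → (∀ i, a i ≤ 1) → ∑ i, a i = 1 →
      ∑ i, ∑ j, a i * a j *
        (dist (x i) (x j) ^ 2 - dist (x i) y ^ 2 - dist (x j) y ^ 2) ≤ 0)
    (N : ℕ) (x : Fin N → X) (p : Fin N → ℝ) (A : Matrix (Fin N) (Fin N) ℝ)
    (hp0 : ∀ i, 0 ≤ p i)
    (hA0 : ∀ i j, 0 ≤ A i j)
    (hrow : ∀ i, ∑ j, A i j = 1)
    (hrev : ∀ i j, p i * A i j = p j * A j i) :
    ∀ l : ℕ,
      ∑ i, ∑ j, p i * (A ^ (2 * l)) i j * dist (x i) (x j) ^ 2 ≤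
        2 * ∑ i, ∑ j, p i * (A ^ l) i j * dist (x i) (x j) ^ 2 := by
  intro l
  have hstoch : A ^ l ∈ rowStochastic ℝ (Fin N) :=
    pow_mem (mem_rowStochastic_iff_sum.2 ⟨hA0, hrow⟩) l
  have hdefect := (IsReversible.pow hrev l).markovEnergy_mul_self_sub_two_mul
    (sum_row_of_mem_rowStochastic hstoch) (c := fun i j => dist (x i) (x j) ^ 2)
    (fun i j => by rw [dist_comm])
  have hsum_nonpos := sum_nonpos fun m (_ : m ∈ univ) => mul_nonpos_of_nonneg_of_nonpos (hp0 m)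
    (hsturm N x (x m) ((A ^ l) m) (fun _ => nonneg_of_mem_rowStochastic hstoch)
      (fun _ => le_one_of_mem_rowStochastic hstoch) (sum_row_of_mem_rowStochastic hstoch m))
  rw [two_mul l, pow_add]
  unfold markovEnergy at hdefect
  linarith

/-- In a metric space satisfying Sturm's inequality, the Markov-chain energy
`ℰ(l) = ∑ᵢⱼ πᵢ a⁽ˡ⁾ᵢⱼ d(xᵢ,xⱼ)²` satisfies the doubling estimate `ℰ(2l) ≤ 2 ℰ(l)`. -/
theorem stmt1 {X : Type*} [MetricSpace X]
    (hsturm : ∀ (N : ℕ) (x : Fin N → X) (y : X) (a : Fin N → ℝ),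
      (∀ i, 0 ≤ a i) → (∀ i, a i ≤ 1) → ∑ i, a i = 1 →
      ∑ i, ∑ j, a i * a j *
        (dist (x i) (x j) ^ 2 - dist (x i) y ^ 2 - dist (x j) y ^ 2) ≤ 0)
    (N : ℕ) (x : Fin N → X) (p : Fin N → ℝ) (A : Matrix (Fin N) (Fin N) ℝ)
    (hp0 : ∀ i, 0 ≤ p i) (hp1 : ∀ i, p i ≤ 1) (hpsum : ∑ i, p i = 1)
    (hA0 : ∀ i j, 0 ≤ A i j) (hA1 : ∀ i j, A i j ≤ 1)
    (hrow : ∀ i, ∑ j, A i j = 1)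
    (hrev : ∀ i j, p i * A i j = p j * A j i) :
    ∀ l : ℕ,
      ∑ i, ∑ j, p i * (A ^ (2 * l)) i j * dist (x i) (x j) ^ 2 ≤
        2 * ∑ i, ∑ j, p i * (A ^ l) i j * dist (x i) (x j) ^ 2 :=
  stmt1_general hsturm N x p A hp0 hA0 hrow hrev
end

section
/- Let ℰ : ℕ → [0,∞) satisfy: (a) √ℰ(l+m) ≤ √ℰ(l) + √ℰ(m) for all l,m ≥ 1, and (b) ℰ(2l) ≤ 2ℰ(l) for all l ≥ 1. Then for every l ≥ 1, ℰ(l) ≤ (1+√2)² · l · ℰ(1). -/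
/-!
Write `c = 1 + √2`. By induction one proves `√ℰ(l) ≤ c √l √ℰ(1)`: doubling gives
`ℰ(2ⁿ) ≤ 2ⁿ ℰ(1)`, and for `l = 2ⁿ + s` with `1 ≤ s ≤ 2ⁿ` subadditivity reduces the step to
`√(2ⁿ) + c √s ≤ c √(2ⁿ + s)`. This holds because `c (√(a+s) - √s) = c a / (√(a+s) + √s)` and
`√(a+s) + √s ≤ (√2 + 1) √a = c √a` whenever `s ≤ a`.
-/

open Real

lemma sqrt_add_one_add_sqrt_two_mul_sqrt_le {a s : ℝ} (hs : 0 ≤ s) (hsa : s ≤ a) :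
    √a + (1 + √2) * √s ≤ (1 + √2) * √(a + s) := by
  have hsum : √(a + s) + √s ≤ (1 + √2) * √a := by
    have h₁ : √(a + s) ≤ √2 * √a := by
      rw [← sqrt_mul zero_le_two]
      exact sqrt_le_sqrt (by linarith)
    have h₂ : √s ≤ √a := sqrt_le_sqrt hsa
    linarith
  have hdiff : (√(a + s) - √s) * (√(a + s) + √s) = √a ^ 2 := by
    rw [mul_comm, ← sq_sub_sq, sq_sqrt (by linarith), sq_sqrt hs, sq_sqrt (by linarith)]
    ring
  have hmono : 0 ≤ √(a + s) - √s := sub_nonneg.2 (sqrt_le_sqrt (by linarith))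
  suffices √a ≤ (1 + √2) * (√(a + s) - √s) by linarith
  rcases (sqrt_nonneg a).eq_or_lt with ha | ha
  · rw [← ha]; positivity
  refine le_of_mul_le_mul_right ?_ ha
  calc √a * √a = (√(a + s) - √s) * (√(a + s) + √s) := by rw [hdiff, sq]
    _ ≤ (√(a + s) - √s) * ((1 + √2) * √a) := mul_le_mul_of_nonneg_left hsum hmono
    _ = (1 + √2) * (√(a + s) - √s) * √a := by ring

lemma Nat.exists_eq_two_pow_add {l : ℕ} (hl : 2 ≤ l) :
    ∃ n s : ℕ, l = 2 ^ n + s ∧ 1 ≤ s ∧ s ≤ 2 ^ n := by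
  set n := Nat.log 2 (l - 1)
  have hle : 2 ^ n ≤ l - 1 := Nat.pow_log_le_self 2 (by omega)
  have hlt : l - 1 < 2 ^ (n + 1) := Nat.lt_pow_succ_log_self (by norm_num) _
  rw [pow_succ] at hlt
  exact ⟨n, l - 2 ^ n, by omega, by omega, by omega⟩

section

variable {E : ℕ → ℝ}

lemma le_two_pow_mul_of_le_two_mul (hdouble : ∀ l : ℕ, 1 ≤ l → E (2 * l) ≤ 2 * E l) (n : ℕ) :
    E (2 ^ n) ≤ 2 ^ n * E 1 := by
  induction n with
  | zero => simp
  | succ n ih =>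
    calc E (2 ^ (n + 1)) = E (2 * 2 ^ n) := by rw [pow_succ']
      _ ≤ 2 * E (2 ^ n) := hdouble _ Nat.one_le_two_pow
      _ ≤ 2 ^ (n + 1) * E 1 := by rw [pow_succ']; linarith

lemma sqrt_le_one_add_sqrt_two_mul_sqrt_mul_sqrt
    (hsub : ∀ l m : ℕ, 1 ≤ l → 1 ≤ m → √(E (l + m)) ≤ √(E l) + √(E m))
    (hdouble : ∀ l : ℕ, 1 ≤ l → E (2 * l) ≤ 2 * E l) :
    ∀ l : ℕ, 1 ≤ l → √(E l) ≤ (1 + √2) * √l * √(E 1) := by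
  intro l
  induction l using Nat.strong_induction_on with
  | _ l ih =>
    intro hl
    rcases hl.eq_or_lt with rfl | hl
    · simp only [Nat.cast_one, sqrt_one, mul_one]
      nlinarith [sqrt_nonneg (E 1), sqrt_nonneg 2]
    obtain ⟨n, s, rfl, hs, hsn⟩ := Nat.exists_eq_two_pow_add hl
    have hpow : √(E (2 ^ n)) ≤ √(2 ^ n) * √(E 1) := by
      rw [← sqrt_mul (by positivity)]
      exact sqrt_le_sqrt (le_two_pow_mul_of_le_two_mul hdouble n)
    have hstep : √(2 ^ n) + (1 + √2) * √s ≤ (1 + √2) * √(2 ^ n + s) :=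
      sqrt_add_one_add_sqrt_two_mul_sqrt_le s.cast_nonneg (by exact_mod_cast hsn)
    calc √(E (2 ^ n + s)) ≤ √(E (2 ^ n)) + √(E s) := hsub _ _ Nat.one_le_two_pow hs
      _ ≤ (√(2 ^ n) + (1 + √2) * √s) * √(E 1) := by
          have := ih s (by omega) hs
          linarith
      _ ≤ (1 + √2) * √(2 ^ n + s) * √(E 1) :=
          mul_le_mul_of_nonneg_right hstep (sqrt_nonneg _)
      _ = (1 + √2) * √↑(2 ^ n + s) * √(E 1) := by push_cast; rfl

end

/-- The abstract numerical induction: if `ℰ` is subadditive in the square-root sense and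
satisfies the doubling bound `ℰ(2l) ≤ 2ℰ(l)`, then `ℰ(l) ≤ (1+√2)² l ℰ(1)`. -/
theorem stmt4 (E : ℕ → ℝ) (hE0 : ∀ l, 0 ≤ E l)
    (hsub : ∀ l m : ℕ, 1 ≤ l → 1 ≤ m →
      Real.sqrt (E (l + m)) ≤ Real.sqrt (E l) + Real.sqrt (E m))
    (hdouble : ∀ l : ℕ, 1 ≤ l → E (2 * l) ≤ 2 * E l) :
    ∀ l : ℕ, 1 ≤ l → E l ≤ (1 + Real.sqrt 2) ^ 2 * l * E 1 := by
  intro l hl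
  calc E l = √(E l) ^ 2 := (sq_sqrt (hE0 l)).symm
    _ ≤ ((1 + √2) * √l * √(E 1)) ^ 2 :=
        pow_le_pow_left₀ (sqrt_nonneg _)
          (sqrt_le_one_add_sqrt_two_mul_sqrt_mul_sqrt hsub hdouble l hl) 2
    _ = (1 + √2) ^ 2 * l * E 1 := by
        rw [mul_pow, mul_pow, sq_sqrt (hE0 1), sq_sqrt l.cast_nonneg]
end

section
/- Let (X,d) be a geodesic metric space and S ≥ 1 a constant such that for all x,y,z ∈ X and every minimal geodesic γ:[0,1]→X from x to z, d(w,γ(1/2))² ≤ (S²/2)d(w,x)² + (1/2)d(w,z)² − (1/4)d(x,z)² holds for all w (with the roles of points as stated). Then for any four points w,x,y,z ∈ X: d(w,y)² + d(x,z)² ≤ S²( d(w,x)² + d(y,z)² ) + d(w,z)² + d(y,x)². -/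
/-! Let `m` be the midpoint of a geodesic from `x` to `z`. Applying the midpoint inequality at `w`
and, along the reversed geodesic, at `y` bounds `d(w,m)²` and `d(y,m)²`; the two `-¼ d(x,z)²` terms
add up to `-½ d(x,z)²`, and `d(w,y)² ≤ 2 d(w,m)² + 2 d(m,y)²` doubles this to `-d(x,z)²`. -/

/-- A unit-interval parametrized minimal (constant-speed, length-minimizing)
geodesic from `y` to `z`. -/
def IsMinGeodesic {X : Type*} [MetricSpace X] (γ : ℝ → X) (y z : X) : Prop :=
  γ 0 = y ∧ γ 1 = z ∧
    ∀ s ∈ Set.Icc (0:ℝ) 1, ∀ t ∈ Set.Icc (0:ℝ) 1,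
      dist (γ s) (γ t) = |s - t| * dist y z

lemma IsMinGeodesic.reverse {X : Type*} [MetricSpace X] {γ : ℝ → X} {y z : X}
    (h : IsMinGeodesic γ y z) : IsMinGeodesic (fun t => γ (1 - t)) z y := by
  obtain ⟨h0, h1, hd⟩ := h
  refine ⟨by simpa using h1, by simpa using h0, fun s hs t ht => ?_⟩
  have hs' : 1 - s ∈ Set.Icc (0 : ℝ) 1 := ⟨by linarith [hs.2], by linarith [hs.1]⟩
  have ht' : 1 - t ∈ Set.Icc (0 : ℝ) 1 := ⟨by linarith [ht.2], by linarith [ht.1]⟩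
  rw [hd _ hs' _ ht', dist_comm z y, sub_sub_sub_cancel_left, abs_sub_comm]

lemma dist_sq_le_two_mul_add {X : Type*} [PseudoMetricSpace X] (a b c : X) :
    dist a c ^ 2 ≤ 2 * (dist a b ^ 2 + dist b c ^ 2) :=
  (pow_le_pow_left₀ dist_nonneg (dist_triangle a b c) 2).trans add_sq_le

theorem stmt8_general {X : Type*} [MetricSpace X] (S : ℝ)
    (hgeo : ∀ y z : X, ∃ γ : ℝ → X, IsMinGeodesic γ y z)
    (hmid : ∀ (w x z : X) (γ : ℝ → X), IsMinGeodesic γ x z →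
      dist w (γ (1/2)) ^ 2 ≤
        S ^ 2 / 2 * dist w x ^ 2 + (1/2) * dist w z ^ 2 - (1/4) * dist x z ^ 2) :
    ∀ w x y z : X,
      dist w y ^ 2 + dist x z ^ 2 ≤
        S ^ 2 * (dist w x ^ 2 + dist y z ^ 2) + dist w z ^ 2 + dist y x ^ 2 := by
  intro w x y z
  obtain ⟨γ, hγ⟩ := hgeo x z
  have hw := hmid w x z γ hγ
  have hy := hmid y z x _ hγ.reverse
  rw [show (1 : ℝ) - 1/2 = 1/2 by norm_num, dist_comm z x] at hy
  have hwy := dist_sq_le_two_mul_add w (γ (1/2)) y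
  rw [dist_comm (γ (1/2)) y] at hwy
  linarith

/-- The generalized 2-uniform smoothness (relaxed CAT(0)) midpoint inequality implies the
four-point inequality. -/
theorem stmt8 {X : Type*} [MetricSpace X] (S : ℝ) (hS : 1 ≤ S)
    (hgeo : ∀ y z : X, ∃ γ : ℝ → X, IsMinGeodesic γ y z)
    (hmid : ∀ (w x z : X) (γ : ℝ → X), IsMinGeodesic γ x z →
      dist w (γ (1/2)) ^ 2 ≤
        S ^ 2 / 2 * dist w x ^ 2 + (1/2) * dist w z ^ 2 - (1/4) * dist x z ^ 2) :
    ∀ w x y z : X,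
      dist w y ^ 2 + dist x z ^ 2 ≤
        S ^ 2 * (dist w x ^ 2 + dist y z ^ 2) + dist w z ^ 2 + dist y x ^ 2 :=
  stmt8_general S hgeo hmid
end

section
/- Let (X,d) be a metric space and S ≥ 1 such that the four-point inequality d(w,y)² + d(x,z)² ≤ S²( d(w,x)² + d(y,z)² ) + d(w,z)² + d(y,x)² holds for all w,x,y,z ∈ X. Then X has Enflo type 2 with constant S: for every N ∈ ℕ and every family of points (x_ε) indexed by ε ∈ {−1,1}^N, Σ_ε d(x_ε, x_{−ε})² ≤ S² Σ_{ε∼ε'} d(x_ε, x_{ε'})², where ε ∼ ε' means ε and ε' differ in exactly one coordinate. -/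
/-!
Split the cube `{−1,1}^(n+1)` along its first coordinate into two faces `y, z : {−1,1}^n → X`.
Each long diagonal of the big cube joins `y δ` to `z (−δ)` or `z δ` to `y (−δ)`; the four-point
inequality applied to the quadrilateral `y δ, z δ, z (−δ), y (−δ)` bounds these two diagonals
by `S²` times the two rungs `d(y δ, z δ)`, `d(y (−δ), z (−δ))` plus the diagonals
`d(y δ, y (−δ))`, `d(z δ, z (−δ))` of the faces. Summing over `δ`, every rung is counted with
the weight `2` it has among the ordered edges of the big cube, and the face diagonals are handled
by induction.
-/

open Finset

/-- Two vertices of the discrete cube `{−1,1}^N` (modelled as `Fin N → Bool`) are adjacent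
if they differ in exactly one coordinate. -/
def Adjacent {N : ℕ} (ε ε' : Fin N → Bool) : Prop :=
  (Finset.univ.filter fun i => ε i ≠ ε' i).card = 1

instance {N : ℕ} (ε ε' : Fin N → Bool) : Decidable (Adjacent ε ε') := by
  unfold Adjacent; infer_instance

section Cube

variable {n : ℕ}

lemma sum_cube_succ {M : Type*} [AddCommMonoid M] (f : (Fin (n + 1) → Bool) → M) :
    ∑ ε, f ε = ∑ δ : Fin n → Bool, (f (Fin.cons false δ) + f (Fin.cons true δ)) := by
  rw [← Fintype.sum_equiv (Fin.consEquiv fun _ => Bool) (fun p => f (Fin.cons p.1 p.2)) f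
    fun _ => rfl, Fintype.sum_prod_type_right]
  simp [add_comm]

lemma card_filter_cons_ne (b b' : Bool) (δ δ' : Fin n → Bool) :
    #{i | (Fin.cons b δ : Fin (n + 1) → Bool) i ≠ (Fin.cons b' δ' : Fin (n + 1) → Bool) i}
      = (if b = b' then 0 else 1) + #{i | δ i ≠ δ' i} := by
  rw [card_filter, card_filter, Fin.sum_univ_succ]
  simp only [Fin.cons_zero, Fin.cons_succ]
  by_cases h : b = b' <;> simp [h]

lemma adjacent_cons_cons_self (b : Bool) (δ δ' : Fin n → Bool) :
    Adjacent (Fin.cons b δ : Fin (n + 1) → Bool) (Fin.cons b δ') ↔ Adjacent δ δ' := by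
  simp [Adjacent, card_filter_cons_ne]

lemma adjacent_cons_cons_of_ne {b b' : Bool} (h : b ≠ b') (δ δ' : Fin n → Bool) :
    Adjacent (Fin.cons b δ : Fin (n + 1) → Bool) (Fin.cons b' δ') ↔ δ = δ' := by
  simp [Adjacent, card_filter_cons_ne, h, funext_iff]

lemma not_cons (b : Bool) (δ : Fin n → Bool) :
    (fun i => !((Fin.cons b δ : Fin (n + 1) → Bool) i)) = Fin.cons (!b) fun i => !(δ i) :=
  Fin.comp_cons not b δ

lemma sum_adjacent_cons {M : Type*} [AddCommMonoid M] (f : (Fin (n + 1) → Bool) → M)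
    (b : Bool) (δ : Fin n → Bool) :
    ∑ ε', (if Adjacent (Fin.cons b δ) ε' then f ε' else 0)
      = (∑ δ', if Adjacent δ δ' then f (Fin.cons b δ') else 0) + f (Fin.cons (!b) δ) := by
  rw [sum_cube_succ]
  cases b <;>
    simp [sum_add_distrib, adjacent_cons_cons_self, adjacent_cons_cons_of_ne, add_comm]

end Cube

def FourPointInequality (X : Type*) [PseudoMetricSpace X] (S : ℝ) : Prop :=
  ∀ w x y z : X,
    dist w y ^ 2 + dist x z ^ 2 ≤
      S ^ 2 * (dist w x ^ 2 + dist y z ^ 2) + dist w z ^ 2 + dist y x ^ 2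

section EnfloType

variable {X : Type*} [PseudoMetricSpace X] {n : ℕ}

def cubeDiagSum {N : ℕ} (x : (Fin N → Bool) → X) : ℝ :=
  ∑ ε : Fin N → Bool, dist (x ε) (x (fun i => !(ε i))) ^ 2

def cubeEdgeSum {N : ℕ} (x : (Fin N → Bool) → X) : ℝ :=
  ∑ ε : Fin N → Bool, ∑ ε' : Fin N → Bool, if Adjacent ε ε' then dist (x ε) (x ε') ^ 2 else 0

lemma cubeDiagSum_zero (x : (Fin 0 → Bool) → X) : cubeDiagSum x = 0 := by
  simp [cubeDiagSum, fun ε : Fin 0 → Bool => Subsingleton.elim (fun i => !(ε i)) ε]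

lemma cubeEdgeSum_nonneg {N : ℕ} (x : (Fin N → Bool) → X) : 0 ≤ cubeEdgeSum x :=
  sum_nonneg fun _ _ => sum_nonneg fun _ _ => by split_ifs <;> positivity

lemma cubeDiagSum_succ (x : (Fin (n + 1) → Bool) → X) :
    cubeDiagSum x = ∑ δ : Fin n → Bool,
      (dist (x (Fin.cons false δ)) (x (Fin.cons true fun i => !(δ i))) ^ 2 +
        dist (x (Fin.cons true δ)) (x (Fin.cons false fun i => !(δ i))) ^ 2) := by
  rw [cubeDiagSum, sum_cube_succ]
  simp only [not_cons, Bool.not_false, Bool.not_true]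

lemma cubeEdgeSum_succ (x : (Fin (n + 1) → Bool) → X) :
    cubeEdgeSum x = cubeEdgeSum (fun δ => x (Fin.cons false δ)) +
      cubeEdgeSum (fun δ => x (Fin.cons true δ)) +
      2 * ∑ δ : Fin n → Bool, dist (x (Fin.cons false δ)) (x (Fin.cons true δ)) ^ 2 := by
  rw [cubeEdgeSum, sum_cube_succ]
  simp only [sum_adjacent_cons, Bool.not_false, Bool.not_true, sum_add_distrib]
  simp only [cubeEdgeSum, dist_comm (x (Fin.cons true _)) (x (Fin.cons false _))]
  ring

lemma cubeDiagSum_succ_le {S : ℝ} (hfour : FourPointInequality X S)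
    (x : (Fin (n + 1) → Bool) → X) :
    cubeDiagSum x ≤ cubeDiagSum (fun δ => x (Fin.cons false δ)) +
      cubeDiagSum (fun δ => x (Fin.cons true δ)) +
        2 * S ^ 2 * ∑ δ : Fin n → Bool, dist (x (Fin.cons false δ)) (x (Fin.cons true δ)) ^ 2 := by
  set y : (Fin n → Bool) → X := fun δ => x (Fin.cons false δ)
  set z : (Fin n → Bool) → X := fun δ => x (Fin.cons true δ)
  have hneg : ∑ δ : Fin n → Bool, dist (z fun i => !(δ i)) (y fun i => !(δ i)) ^ 2
      = ∑ δ, dist (y δ) (z δ) ^ 2 := by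
    have hinv : Function.Involutive fun (δ : Fin n → Bool) i => !(δ i) :=
      fun δ => funext fun i => Bool.not_not (δ i)
    rw [← Equiv.sum_comp (hinv.toPerm _) fun δ => dist (y δ) (z δ) ^ 2]
    simp only [Function.Involutive.coe_toPerm, dist_comm]
  calc cubeDiagSum x
      = ∑ δ, (dist (y δ) (z fun i => !(δ i)) ^ 2 + dist (z δ) (y fun i => !(δ i)) ^ 2) :=
        cubeDiagSum_succ x
    _ ≤ ∑ δ, (S ^ 2 * (dist (y δ) (z δ) ^ 2 + dist (z fun i => !(δ i)) (y fun i => !(δ i)) ^ 2)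
          + dist (y δ) (y fun i => !(δ i)) ^ 2 + dist (z δ) (z fun i => !(δ i)) ^ 2) :=
        sum_le_sum fun δ _ => (hfour _ _ _ _).trans_eq (by rw [dist_comm (z _) (z δ)])
    _ = _ := by
        simp only [sum_add_distrib, ← mul_sum, hneg, cubeDiagSum]
        ring

theorem cubeDiagSum_le_of_fourPointInequality {S : ℝ} (hfour : FourPointInequality X S) :
    ∀ {N : ℕ} (x : (Fin N → Bool) → X), cubeDiagSum x ≤ S ^ 2 * cubeEdgeSum x
  | 0, x => (cubeDiagSum_zero x).trans_le (mul_nonneg (sq_nonneg S) (cubeEdgeSum_nonneg x))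
  | n + 1, x => by
    have hy := cubeDiagSum_le_of_fourPointInequality hfour fun δ => x (Fin.cons false δ)
    have hz := cubeDiagSum_le_of_fourPointInequality hfour fun δ => x (Fin.cons true δ)
    rw [cubeEdgeSum_succ]
    linarith [cubeDiagSum_succ_le hfour x]

end EnfloType

theorem stmt9_general {X : Type*} [MetricSpace X] (S : ℝ)
    (hfour : ∀ w x y z : X,
      dist w y ^ 2 + dist x z ^ 2 ≤
        S ^ 2 * (dist w x ^ 2 + dist y z ^ 2) + dist w z ^ 2 + dist y x ^ 2)
    (N : ℕ) (x : (Fin N → Bool) → X) :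
    ∑ ε : Fin N → Bool, dist (x ε) (x (fun i => !(ε i))) ^ 2 ≤
      S ^ 2 * ∑ ε : Fin N → Bool, ∑ ε' : Fin N → Bool,
        if Adjacent ε ε' then dist (x ε) (x ε') ^ 2 else 0 :=
  cubeDiagSum_le_of_fourPointInequality hfour x

/-- The four-point inequality with constant `S` implies Enflo type 2 with constant `S`. -/
theorem stmt9 {X : Type*} [MetricSpace X] (S : ℝ) (hS : 1 ≤ S)
    (hfour : ∀ w x y z : X,
      dist w y ^ 2 + dist x z ^ 2 ≤
        S ^ 2 * (dist w x ^ 2 + dist y z ^ 2) + dist w z ^ 2 + dist y x ^ 2)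
    (N : ℕ) (x : (Fin N → Bool) → X) :
    ∑ ε : Fin N → Bool, dist (x ε) (x (fun i => !(ε i))) ^ 2 ≤
      S ^ 2 * ∑ ε : Fin N → Bool, ∑ ε' : Fin N → Bool,
        if Adjacent ε ε' then dist (x ε) (x ε') ^ 2 else 0 :=
  stmt9_general S hfour N x
end
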